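/- Q' is a left ideal of the algebra #(C,A); for all q ∈ Q' and a ∈ A one has a_ψ q(x^ψ) ∈ B'; and for all a ∈ A and q, q' ∈ Q': (q # i(a)) # q' = q # i(a_ψ q'(x^ψ)). (These are the data and compatibility conditions of the Morita context (B', #(C,A), A, Q', τ', μ') with μ'(q ⊗ a) = q # i(a) and τ'(a ⊗ q) = a_ψ q(x^ψ).) -/

import Mathlib

open TensorProduct

noncomputable section

variable {k A C : Type*} [CommRing k] [Ring A] [Algebra k A]
  [AddCommGroup C] [Module k C] [Coalgebra k C]

/-- An entwining structure `(A, C, ψ)`. -/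
structure IsEntwining (k : Type*) {A C : Type*} [CommRing k] [Ring A] [Algebra k A]
    [AddCommGroup C] [Module k C] [Coalgebra k C]
    (ψ : C ⊗[k] A →ₗ[k] A ⊗[k] C) : Prop where
  mul_compat : ψ ∘ₗ LinearMap.lTensor C (LinearMap.mul' k A) =
    LinearMap.rTensor C (LinearMap.mul' k A) ∘ₗ (TensorProduct.assoc k A A C).symm.toLinearMap ∘ₗ
      LinearMap.lTensor A ψ ∘ₗ (TensorProduct.assoc k A C A).toLinearMap ∘ₗ
      LinearMap.rTensor A ψ ∘ₗ (TensorProduct.assoc k C A A).symm.toLinearMap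
  one_compat : ∀ c : C, ψ (c ⊗ₜ[k] 1) = 1 ⊗ₜ[k] c
  comul_compat : LinearMap.lTensor A Coalgebra.comul ∘ₗ ψ =
    (TensorProduct.assoc k A C C).toLinearMap ∘ₗ LinearMap.rTensor C ψ ∘ₗ
      (TensorProduct.assoc k C A C).symm.toLinearMap ∘ₗ LinearMap.lTensor C ψ ∘ₗ
      (TensorProduct.assoc k C C A).toLinearMap ∘ₗ LinearMap.rTensor A Coalgebra.comul
  counit_compat : ∀ (c : C) (a : A),
    TensorProduct.rid k A (LinearMap.lTensor A Coalgebra.counit (ψ (c ⊗ₜ[k] a))) =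
      (Coalgebra.counit (R := k) c) • a

/-- The smash product multiplication on `Hom_k(C,A)`: `(f # g)(c) = f(c₂)_ψ g((c₁)^ψ)`. -/
def smashMul (ψ : C ⊗[k] A →ₗ[k] A ⊗[k] C) (f g : C →ₗ[k] A) : C →ₗ[k] A :=
  LinearMap.mul' k A ∘ₗ LinearMap.lTensor A g ∘ₗ ψ ∘ₗ LinearMap.lTensor C f ∘ₗ Coalgebra.comul

/-- The unit of `#(C,A)`: `c ↦ ε(c) 1_A`. -/
def smashOne (k : Type*) (A C : Type*) [CommRing k] [Ring A] [Algebra k A]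
    [AddCommGroup C] [Module k C] [Coalgebra k C] : C →ₗ[k] A :=
  Algebra.linearMap k A ∘ₗ Coalgebra.counit

/-- The ring morphism `i : A → #(C,A)`, `i(a)(c) = ε(c) a`. -/
def smashIota (k : Type*) {A : Type*} (C : Type*) [CommRing k] [Ring A] [Algebra k A]
    [AddCommGroup C] [Module k C] [Coalgebra k C] (a : A) : C →ₗ[k] A :=
  (Coalgebra.counit : C →ₗ[k] k).smulRight a


/-- `q ∈ Q'` iff `q(c₂)_ψ ⊗ (c₁)^ψ = q(c) ⊗ x` for all `c`. -/
def QprimeCond (ψ : C ⊗[k] A →ₗ[k] A ⊗[k] C) (x : C) (q : C →ₗ[k] A) : Prop :=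
  ∀ c : C, ψ (LinearMap.lTensor C q (Coalgebra.comul c)) = q c ⊗ₜ[k] x

/-- `b ∈ B'` iff `b_ψ ⊗ x^ψ = b ⊗ x`. -/
def BprimeCond (ψ : C ⊗[k] A →ₗ[k] A ⊗[k] C) (x : C) (b : A) : Prop :=
  ψ (x ⊗ₜ[k] b) = b ⊗ₜ[k] x

/-- The connecting map `τ' : A ⊗ Q' → B'`, `τ'(a ⊗ q) = a_ψ q(x^ψ)`. -/
def tau' (ψ : C ⊗[k] A →ₗ[k] A ⊗[k] C) (x : C) (a : A) (q : C →ₗ[k] A) : A :=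
  LinearMap.mul' k A (LinearMap.lTensor A q (ψ (x ⊗ₜ[k] a)))

/-!
For `q ∈ Q'` put `τ_q(c ⊗ a) = a_ψ q(c^ψ)`. Multiplicativity of `ψ` rewrites `ψ(c₁ ⊗ τ_q(c₂ ⊗ a))`
so that the comultiplicativity axiom applies, and what remains is the defining identity of `Q'`:
`ψ(c₁ ⊗ τ_q(c₂ ⊗ a)) = τ_q(c ⊗ a) ⊗ x`. At `c = x` this says `τ'(a ⊗ q) ∈ B'`, and since
`(f # q)(c) = τ_q(c₁ ⊗ f(c₂))`, coassociativity turns it into `f # q ∈ Q'`. For the Morita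
identity, counitality gives `g # i(b) = g(-) b`, and multiplicativity of `ψ` together with
`q(c₂)_ψ ⊗ (c₁)^ψ = q(c) ⊗ x` gives `(q(-) a) # q' = q(-) τ'(a ⊗ q')`.
-/

open LinearMap (lTensor rTensor mul' mulLeft mulRight)

lemma lTensor_lTensor_comp_assoc {M N P Q : Type*} [AddCommGroup M] [Module k M] [AddCommGroup N]
    [Module k N] [AddCommGroup P] [Module k P] [AddCommGroup Q] [Module k Q] (f : P →ₗ[k] Q) :
    lTensor M (lTensor N f) ∘ₗ (TensorProduct.assoc k M N P).toLinearMap =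
      (TensorProduct.assoc k M N Q).toLinearMap ∘ₗ lTensor (M ⊗[k] N) f :=
  TensorProduct.ext <| TensorProduct.ext rfl

section LeftExtension

variable {M N : Type*} [AddCommGroup M] [Module k M] [AddCommGroup N] [Module k N]

def evalMul (q : M →ₗ[k] A) : A ⊗[k] M →ₗ[k] A := mul' k A ∘ₗ lTensor A q

@[simp]
lemma evalMul_tmul (q : M →ₗ[k] A) (a : A) (m : M) : evalMul q (a ⊗ₜ m) = a * q m := rfl

lemma evalMul_rTensor_mulLeft (q : M →ₗ[k] A) (b : A) (t : A ⊗[k] M) :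
    evalMul q (rTensor M (mulLeft k b) t) = b * evalMul q t := by
  induction t using TensorProduct.induction_on with
  | zero => simp
  | tmul a m => simp [mul_assoc]
  | add s t hs ht => simp [hs, ht, mul_add]

def leftExtend (φ : N →ₗ[k] A ⊗[k] M) : A ⊗[k] N →ₗ[k] A ⊗[k] M :=
  rTensor M (mul' k A) ∘ₗ (TensorProduct.assoc k A A M).symm.toLinearMap ∘ₗ lTensor A φ

@[simp]
lemma leftExtend_tmul (φ : N →ₗ[k] A ⊗[k] M) (a : A) (n : N) :
    leftExtend φ (a ⊗ₜ n) = rTensor M (mulLeft k a) (φ n) := by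
  suffices h : rTensor M (mul' k A) ∘ₗ
      (TensorProduct.assoc k A A M).symm.toLinearMap ∘ₗ TensorProduct.mk k A (A ⊗[k] M) a =
        rTensor M (mulLeft k a) from LinearMap.congr_fun h (φ n)
  ext b m
  simp

lemma leftExtend_comp_lTensor {P : Type*} [AddCommGroup P] [Module k P]
    (φ : N →ₗ[k] A ⊗[k] M) (g : P →ₗ[k] N) :
    leftExtend (φ ∘ₗ g) = leftExtend φ ∘ₗ lTensor A g := by
  simp only [leftExtend, LinearMap.lTensor_comp, LinearMap.comp_assoc]

lemma leftExtend_mk_flip_comp (q : N →ₗ[k] A) (m : M) :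
    leftExtend ((TensorProduct.mk k A M).flip m ∘ₗ q) =
      (TensorProduct.mk k A M).flip m ∘ₗ evalMul q := by
  ext a n
  simp

end LeftExtension

lemma lTensor_comp_lTensor_comp_comul_comp_comul {M N : Type*} [AddCommGroup M] [Module k M]
    [AddCommGroup N] [Module k N] (f : C →ₗ[k] M) (g : C ⊗[k] M →ₗ[k] N) :
    lTensor C (g ∘ₗ lTensor C f ∘ₗ Coalgebra.comul) ∘ₗ Coalgebra.comul =
      lTensor C g ∘ₗ (TensorProduct.assoc k C C M).toLinearMap ∘ₗ
        rTensor M Coalgebra.comul ∘ₗ lTensor C f ∘ₗ Coalgebra.comul := by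
  simp only [LinearMap.lTensor_comp, LinearMap.comp_assoc, ← Coalgebra.coassoc]
  congr 1
  rw [← LinearMap.comp_assoc, lTensor_lTensor_comp_assoc, LinearMap.comp_assoc]
  congr 1
  rw [← LinearMap.comp_assoc, ← LinearMap.comp_assoc, LinearMap.lTensor_comp_rTensor,
    LinearMap.rTensor_comp_lTensor]

def qprime (ψ : C ⊗[k] A →ₗ[k] A ⊗[k] C) (x : C) : Submodule k (C →ₗ[k] A) where
  carrier := {q | QprimeCond ψ x q}
  zero_mem' c := by simp
  add_mem' {q q'} hq hq' c := by simp [hq c, hq' c, add_tmul]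
  smul_mem' r q hq c := by simp [hq c, smul_tmul']

namespace IsEntwining

variable {ψ : C ⊗[k] A →ₗ[k] A ⊗[k] C} (hψ : IsEntwining k ψ)
include hψ

lemma psi_tmul_mul (c : C) (a b : A) :
    ψ (c ⊗ₜ (a * b)) = leftExtend ψ (TensorProduct.assoc k A C A (ψ (c ⊗ₜ a) ⊗ₜ b)) := by
  simpa [leftExtend] using LinearMap.congr_fun hψ.mul_compat (c ⊗ₜ (a ⊗ₜ b))

lemma psi_lTensor_mulRight (b : A) (t : C ⊗[k] A) :
    ψ (lTensor C (mulRight k b) t) =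
      leftExtend ψ (TensorProduct.assoc k A C A (ψ t ⊗ₜ b)) := by
  induction t using TensorProduct.induction_on with
  | zero => simp
  | tmul c a => exact hψ.psi_tmul_mul c a b
  | add s t hs ht => simp only [map_add, hs, ht, add_tmul]

lemma psi_comp_lTensor_evalMul (q : C →ₗ[k] A) :
    ψ ∘ₗ lTensor C (evalMul q) =
      leftExtend (ψ ∘ₗ lTensor C q) ∘ₗ (TensorProduct.assoc k A C C).toLinearMap ∘ₗ
        rTensor C ψ ∘ₗ (TensorProduct.assoc k C A C).symm.toLinearMap := by
  ext c a c'
  simp only [TensorProduct.AlgebraTensorModule.curry_apply, TensorProduct.curry_apply,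
    LinearMap.restrictScalars_apply, LinearMap.comp_apply, LinearMap.lTensor_tmul,
    evalMul_tmul, hψ.psi_tmul_mul, leftExtend_comp_lTensor]
  congr 1
  simpa using (LinearMap.congr_fun (lTensor_lTensor_comp_assoc (M := A) q) (ψ (c ⊗ₜ a) ⊗ₜ c')).symm

lemma psi_comp_lTensor_evalMul_psi_comp_comul {x : C} {q : C →ₗ[k] A} (hq : QprimeCond ψ x q) :
    ψ ∘ₗ lTensor C (evalMul q ∘ₗ ψ) ∘ₗ (TensorProduct.assoc k C C A).toLinearMap ∘ₗ
        rTensor A Coalgebra.comul =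
      (TensorProduct.mk k A C).flip x ∘ₗ evalMul q ∘ₗ ψ := by
  have hq' : ψ ∘ₗ lTensor C q ∘ₗ Coalgebra.comul = (TensorProduct.mk k A C).flip x ∘ₗ q :=
    LinearMap.ext hq
  calc _ = leftExtend (ψ ∘ₗ lTensor C q) ∘ₗ
        ((TensorProduct.assoc k A C C).toLinearMap ∘ₗ rTensor C ψ ∘ₗ
          (TensorProduct.assoc k C A C).symm.toLinearMap ∘ₗ lTensor C ψ ∘ₗ
          (TensorProduct.assoc k C C A).toLinearMap ∘ₗ rTensor A Coalgebra.comul) := by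
        simp only [LinearMap.lTensor_comp, ← LinearMap.comp_assoc, hψ.psi_comp_lTensor_evalMul]
    _ = leftExtend (ψ ∘ₗ lTensor C q ∘ₗ Coalgebra.comul) ∘ₗ ψ := by
        rw [← hψ.comul_compat]
        simp only [leftExtend_comp_lTensor, LinearMap.lTensor_comp, LinearMap.comp_assoc]
    _ = _ := by rw [hq', leftExtend_mk_flip_comp, LinearMap.comp_assoc]

lemma rid_lTensor_counit_comp_psi :
    (TensorProduct.rid k A).toLinearMap ∘ₗ lTensor A Coalgebra.counit ∘ₗ ψ =
      (TensorProduct.lid k A).toLinearMap ∘ₗ rTensor A Coalgebra.counit := by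
  ext c a
  simpa using hψ.counit_compat c a

lemma smashMul_smashIota (g : C →ₗ[k] A) (b : A) :
    smashMul ψ g (smashIota k C b) = mulRight k b ∘ₗ g := by
  have hι : evalMul (smashIota k C b) = mulRight k b ∘ₗ
      (TensorProduct.rid k A).toLinearMap ∘ₗ lTensor A Coalgebra.counit := by
    ext a c
    simp [smashIota]
  ext c
  change evalMul (smashIota k C b) (ψ (lTensor C g (Coalgebra.comul c))) = g c * b
  have hcounit := LinearMap.congr_fun hψ.rid_lTensor_counit_comp_psi
  simp only [hι, LinearMap.comp_apply, LinearMap.mulRight_apply] at hcounit ⊢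
  rw [hcounit, ← LinearMap.comp_apply (rTensor A _), LinearMap.rTensor_comp_lTensor,
    ← LinearMap.lTensor_comp_rTensor, LinearMap.comp_apply, Coalgebra.rTensor_counit_comul]
  simp

lemma smashMul_mulRight_comp {x : C} {q : C →ₗ[k] A} (hq : QprimeCond ψ x q) (a : A)
    (q' : C →ₗ[k] A) :
    smashMul ψ (mulRight k a ∘ₗ q) q' = mulRight k (tau' ψ x a q') ∘ₗ q := by
  ext c
  change evalMul q' (ψ (lTensor C (mulRight k a ∘ₗ q) (Coalgebra.comul c))) =
    q c * evalMul q' (ψ (x ⊗ₜ a))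
  rw [LinearMap.lTensor_comp, LinearMap.comp_apply, hψ.psi_lTensor_mulRight, hq c,
    TensorProduct.assoc_tmul, leftExtend_tmul, evalMul_rTensor_mulLeft]

lemma qprimeCond_smashMul {x : C} {q : C →ₗ[k] A} (hq : QprimeCond ψ x q) (f : C →ₗ[k] A) :
    QprimeCond ψ x (smashMul ψ f q) := by
  intro c
  have h := LinearMap.congr_fun
    (lTensor_comp_lTensor_comp_comul_comp_comul (N := A) f (evalMul q ∘ₗ ψ)) c
  have key := LinearMap.congr_fun (hψ.psi_comp_lTensor_evalMul_psi_comp_comul hq)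
    (lTensor C f (Coalgebra.comul c))
  simp only [LinearMap.comp_apply] at h key
  exact (congrArg ψ h).trans key

lemma bprimeCond_tau' {x : C} (hx : Coalgebra.comul (R := k) x = x ⊗ₜ x) {q : C →ₗ[k] A}
    (hq : QprimeCond ψ x q) (a : A) : BprimeCond ψ x (tau' ψ x a q) := by
  show ψ (x ⊗ₜ evalMul q (ψ (x ⊗ₜ a))) = evalMul q (ψ (x ⊗ₜ a)) ⊗ₜ x
  simpa [hx] using LinearMap.congr_fun (hψ.psi_comp_lTensor_evalMul_psi_comp_comul hq) (x ⊗ₜ a)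

end IsEntwining

theorem Qprime_left_ideal_and_context (ψ : C ⊗[k] A →ₗ[k] A ⊗[k] C) (hψ : IsEntwining k ψ)
    (x : C) (hx1 : Coalgebra.comul (R := k) x = x ⊗ₜ[k] x) :
    -- Q' is an additive subgroup closed under k-scalars …
    QprimeCond ψ x (0 : C →ₗ[k] A) ∧
    (∀ q q' : C →ₗ[k] A, QprimeCond ψ x q → QprimeCond ψ x q' → QprimeCond ψ x (q + q')) ∧
    (∀ (r : k) (q : C →ₗ[k] A), QprimeCond ψ x q → QprimeCond ψ x (r • q)) ∧
    -- … and a left ideal of #(C,A)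
    (∀ f q : C →ₗ[k] A, QprimeCond ψ x q → QprimeCond ψ x (smashMul ψ f q)) ∧
    -- τ' takes values in B'
    (∀ (a : A) (q : C →ₗ[k] A), QprimeCond ψ x q → BprimeCond ψ x (tau' ψ x a q)) ∧
    -- Morita compatibility : (q # i(a)) # q' = q # i(a_ψ q'(x^ψ))
    (∀ (a : A) (q q' : C →ₗ[k] A), QprimeCond ψ x q → QprimeCond ψ x q' →
      smashMul ψ (smashMul ψ q (smashIota k C a)) q' =
        smashMul ψ q (smashIota k C (tau' ψ x a q'))) := by
  refine ⟨(qprime ψ x).zero_mem, fun q q' => (qprime ψ x).add_mem,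
    fun r q => (qprime ψ x).smul_mem r, fun f q hq => hψ.qprimeCond_smashMul hq f,
    fun a q hq => hψ.bprimeCond_tau' hx1 hq a, fun a q q' hq _ => ?_⟩
  rw [hψ.smashMul_smashIota, hψ.smashMul_smashIota, hψ.smashMul_mulRight_comp hq]

end
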